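/- In a trigroup with [x, y, z] = (x ⊥ y) ⊢ z ⊣ (y⁻¹ ⊥ x⁻¹), for fixed x₁, x₂ the map z ↦ [x₁, x₂, z] preserves all three operations: [x₁,x₂, y ⊢ z] = [x₁,x₂,y] ⊢ [x₁,x₂,z], [x₁,x₂, y ⊥ z] = [x₁,x₂,y] ⊥ [x₁,x₂,z], and [x₁,x₂, y ⊣ z] = [x₁,x₂,y] ⊣ [x₁,x₂,z]. -/
import Mathlib


structure Trigroup (A : Type*) where
  l : A → A → A
  m : A → A → A
  r : A → A → A
  one : A
  inv : A → A
  l_assoc : ∀ x y z : A, l (l x y) z = l x (l y z)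
  m_assoc : ∀ x y z : A, m (m x y) z = m x (m y z)
  r_assoc : ∀ x y z : A, r (r x y) z = r x (r y z)
  L1 : ∀ x y z : A, l x (l y z) = l (r x y) z
  L2 : ∀ x y z : A, l x (r y z) = r (l x y) z
  R1 : ∀ x y z : A, r x (r y z) = r x (l y z)
  R2 : ∀ x y z : A, r (l x y) z = l x (r y z)
  L1m : ∀ x y z : A, l x (l y z) = l (m x y) z
  L2m : ∀ x y z : A, l x (m y z) = m (l x y) z
  R1m : ∀ x y z : A, r x (r y z) = r x (m y z)
  R2m : ∀ x y z : A, r (m x y) z = m x (r y z)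
  T4 : ∀ x y z : A, m (r x y) z = m x (l y z)
  one_l : ∀ x : A, l one x = x
  r_one : ∀ x : A, r x one = x
  l_inv : ∀ x : A, l x (inv x) = one
  inv_r : ∀ x : A, r (inv x) x = one
  m_inv : ∀ x : A, m x (inv x) = one
  inv_m : ∀ x : A, m (inv x) x = one

def Trigroup.bracket {A : Type*} (T : Trigroup A) (x y z : A) : A :=
  T.r (T.l (T.m x y) z) (T.m (T.inv y) (T.inv x))

lemma Trigroup.inv_one {A : Type*} (T : Trigroup A) : T.inv T.one = T.one := by
  conv_lhs => rw [← T.one_l (T.inv T.one)]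
  exact T.l_inv T.one

lemma Trigroup.key {A : Type*} (T : Trigroup A) (x₁ x₂ : A) :
    T.r (T.m (T.inv x₂) (T.inv x₁)) (T.m x₁ x₂) = T.one := by
  calc T.r (T.m (T.inv x₂) (T.inv x₁)) (T.m x₁ x₂)
      = T.m (T.inv x₂) (T.r (T.inv x₁) (T.m x₁ x₂)) := T.R2m _ _ _
    _ = T.m (T.inv x₂) (T.r (T.inv x₁) (T.r x₁ x₂)) := by rw [T.R1m]
    _ = T.m (T.inv x₂) (T.r (T.r (T.inv x₁) x₁) x₂) := by rw [T.r_assoc]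
    _ = T.m (T.inv x₂) (T.r T.one x₂) := by rw [T.inv_r]
    _ = T.m (T.inv x₂) (T.r (T.l x₂ (T.inv x₂)) x₂) := by rw [T.l_inv]
    _ = T.m (T.inv x₂) (T.l x₂ (T.r (T.inv x₂) x₂)) := by rw [T.R2]
    _ = T.m (T.inv x₂) (T.l x₂ T.one) := by rw [T.inv_r]
    _ = T.m (T.r (T.inv x₂) x₂) T.one := (T.T4 _ _ _).symm
    _ = T.m T.one T.one := by rw [T.inv_r]
    _ = T.m T.one (T.inv T.one) := by rw [T.inv_one]
    _ = T.one := T.m_inv _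

theorem trigroup_bracket_hom {A : Type*} (T : Trigroup A) (x₁ x₂ : A) :
    (∀ y z : A, T.bracket x₁ x₂ (T.l y z) = T.l (T.bracket x₁ x₂ y) (T.bracket x₁ x₂ z)) ∧
    (∀ y z : A, T.bracket x₁ x₂ (T.m y z) = T.m (T.bracket x₁ x₂ y) (T.bracket x₁ x₂ z)) ∧
    (∀ y z : A, T.bracket x₁ x₂ (T.r y z) = T.r (T.bracket x₁ x₂ y) (T.bracket x₁ x₂ z)) := by
  set a := T.m x₁ x₂ with ha
  set b := T.m (T.inv x₂) (T.inv x₁) with hb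
  have key : T.r b a = T.one := T.key x₁ x₂
  refine ⟨fun y z => ?_, fun y z => ?_, fun y z => ?_⟩
  · show T.r (T.l a (T.l y z)) b
        = T.l (T.r (T.l a y) b) (T.r (T.l a z) b)
    refine Eq.symm ?_
    calc T.l (T.r (T.l a y) b) (T.r (T.l a z) b)
        = T.r (T.l (T.r (T.l a y) b) (T.l a z)) b := (T.L2 _ _ _)
      _ = T.r (T.l (T.r (T.r (T.l a y) b) a) z) b := by rw [T.L1]
      _ = T.r (T.l (T.r (T.l a y) (T.r b a)) z) b := by rw [T.r_assoc]
      _ = T.r (T.l (T.r (T.l a y) T.one) z) b := by rw [key]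
      _ = T.r (T.l (T.l a y) z) b := by rw [T.r_one]
      _ = T.r (T.l a (T.l y z)) b := by rw [T.l_assoc]
  · show T.r (T.l a (T.m y z)) b
        = T.m (T.r (T.l a y) b) (T.r (T.l a z) b)
    refine Eq.symm ?_
    calc T.m (T.r (T.l a y) b) (T.r (T.l a z) b)
        = T.r (T.m (T.r (T.l a y) b) (T.l a z)) b := (T.R2m _ _ _).symm
      _ = T.r (T.m (T.l a y) (T.l b (T.l a z))) b := by rw [T.T4]
      _ = T.r (T.m (T.l a y) (T.l (T.r b a) z)) b := by rw [T.L1]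
      _ = T.r (T.m (T.l a y) (T.l T.one z)) b := by rw [key]
      _ = T.r (T.m (T.l a y) z) b := by rw [T.one_l]
      _ = T.r (T.l a (T.m y z)) b := by rw [← T.L2m]
  · show T.r (T.l a (T.r y z)) b
        = T.r (T.r (T.l a y) b) (T.r (T.l a z) b)
    refine Eq.symm ?_
    calc T.r (T.r (T.l a y) b) (T.r (T.l a z) b)
        = T.r (T.l a y) (T.r b (T.r (T.l a z) b)) := T.r_assoc _ _ _
      _ = T.r (T.l a y) (T.r (T.r b (T.l a z)) b) := by rw [← T.r_assoc b (T.l a z) b]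
      _ = T.r (T.l a y) (T.r (T.r b (T.r a z)) b) := by rw [← T.R1 b a z]
      _ = T.r (T.l a y) (T.r (T.r (T.r b a) z) b) := by rw [← T.r_assoc b a z]
      _ = T.r (T.l a y) (T.r (T.r T.one z) b) := by rw [key]
      _ = T.r (T.r (T.l a y) (T.r T.one z)) b := by rw [← T.r_assoc (T.l a y) (T.r T.one z) b]
      _ = T.r (T.r (T.r (T.l a y) T.one) z) b := by rw [← T.r_assoc (T.l a y) T.one z]
      _ = T.r (T.r (T.l a y) z) b := by rw [T.r_one]
      _ = T.r (T.l a (T.r y z)) b := by rw [T.R2]
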